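/- arXiv:1001.1065 — 4 statements merged into one kernel-verified Lean document; each statement's English description precedes it below -/
import Mathlib

section
/- Let n ≥ 2 and let p be a probability vector on {1,…,n}. For n−1 iid draws from p, the probability that the number 2 is unchosen AND the number 1 is not chosen exactly once equals (1 − p₂)^(n−1) − (n−1)·p₁·(1 − p₁ − p₂)^(n−2). -/
/-!
Tuples avoiding the number 2 form the product set of `{1,…,n} \ {2}`, of total weight
`(1 - p₂)^(n-1)`. Those among them that hit 1 exactly once split, according to the position of
that hit, into `n - 1` disjoint product sets, each of weight `p₁ (1 - p₁ - p₂)^(n-2)`; the event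
in question is the difference of the two.
-/

open Finset

section
variable {ι α R : Type*} [Fintype ι] [DecidableEq ι] [DecidableEq α]

theorem forall_mem_and_card_filter_eq_one_iff {s : Finset α} {a : α} (ha : a ∈ s) (f : ι → α) :
    ((∀ k, f k ∈ s) ∧ #{k | f k = a} = 1) ↔
      ∃ k₀, f ∈ Fintype.piFinset fun k => if k = k₀ then {a} else s.erase a := by
  simp only [Fintype.mem_piFinset, card_eq_one, eq_singleton_iff_unique_mem, mem_filter,
    mem_univ, true_and]
  constructor
  · rintro ⟨hs, k₀, hk₀, huniq⟩
    refine ⟨k₀, fun k => ?_⟩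
    split_ifs with hk
    · simp [hk, hk₀]
    · exact mem_erase.2 ⟨fun h => hk (huniq k h), hs k⟩
  · rintro ⟨k₀, hf⟩
    have hf' : ∀ k, k ≠ k₀ → f k ≠ a ∧ f k ∈ s := fun k hk => by
      simpa [hk] using hf k
    have hk₀ : f k₀ = a := by simpa using hf k₀
    refine ⟨fun k => ?_, k₀, hk₀, fun k hk => ?_⟩
    · by_cases hk : k = k₀
      · rwa [hk, hk₀]
      · exact (hf' k hk).2
    · by_contra hne
      exact (hf' k hne).1 hk

theorem Fintype.prod_ite_eq_mul_pow [CommMonoid R] (k₀ : ι) (x y : R) :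
    ∏ k, (if k = k₀ then x else y) = x * y ^ (Fintype.card ι - 1) := by
  rw [prod_ite, prod_const, prod_const, filter_eq', if_pos (mem_univ _), card_singleton,
    pow_one, filter_ne', card_erase_of_mem (mem_univ _), card_univ]

variable [Fintype α]

theorem sum_prod_filter_forall_mem [CommSemiring R] (p : α → R) (s : Finset α) :
    ∑ f ∈ univ.filter (fun f : ι → α => ∀ k, f k ∈ s), ∏ k, p (f k) =
      (∑ i ∈ s, p i) ^ Fintype.card ι := by
  have hF : univ.filter (fun f : ι → α => ∀ k, f k ∈ s) = Fintype.piFinset fun _ => s := by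
    ext f
    simp [Fintype.mem_piFinset]
  rw [hF, sum_prod_piFinset, prod_const, card_univ]

theorem sum_prod_filter_forall_mem_and_card_filter_eq_one [CommSemiring R] (p : α → R)
    {s : Finset α} {a : α} (ha : a ∈ s) :
    ∑ f ∈ univ.filter (fun f : ι → α => (∀ k, f k ∈ s) ∧ #{k | f k = a} = 1), ∏ k, p (f k) =
      Fintype.card ι * p a * (∑ i ∈ s.erase a, p i) ^ (Fintype.card ι - 1) := by
  set P : ι → Finset (ι → α) := fun k₀ =>
    Fintype.piFinset fun k => if k = k₀ then {a} else s.erase a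
  have hF : univ.filter (fun f : ι → α => (∀ k, f k ∈ s) ∧ #{k | f k = a} = 1) =
      univ.biUnion P := by
    ext f
    simp only [mem_filter, mem_univ, true_and, mem_biUnion,
      forall_mem_and_card_filter_eq_one_iff ha, P]
  have hdisj : ((univ : Finset ι) : Set ι).PairwiseDisjoint P := by
    intro i _ j _ hij
    refine disjoint_left.2 fun f hfi hfj => ?_
    have hi : f i = a := by simpa [P] using Fintype.mem_piFinset.1 hfi i
    have hj : f i ∈ s.erase a := by simpa [P, hij] using Fintype.mem_piFinset.1 hfj i
    exact notMem_erase a s (hi ▸ hj)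
  have hP : ∀ k₀, ∑ f ∈ P k₀, ∏ k, p (f k) =
      p a * (∑ i ∈ s.erase a, p i) ^ (Fintype.card ι - 1) := by
    intro k₀
    rw [← prod_univ_sum]
    simp only [apply_ite (fun t => ∑ i ∈ t, p i), sum_singleton]
    exact Fintype.prod_ite_eq_mul_pow k₀ _ _
  rw [hF, sum_biUnion hdisj, sum_congr rfl fun k₀ _ => hP k₀, sum_const,
    card_univ, nsmul_eq_mul, mul_assoc]

theorem sum_prod_filter_forall_ne_and_card_filter_ne_one [CommRing R] (p : α → R)
    (hp : ∑ i, p i = 1) {a b : α} (hab : a ≠ b) :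
    ∑ f ∈ univ.filter (fun f : ι → α => (∀ k, f k ≠ b) ∧ #{k | f k = a} ≠ 1), ∏ k, p (f k) =
      (1 - p b) ^ Fintype.card ι -
        Fintype.card ι * p a * (1 - p a - p b) ^ (Fintype.card ι - 1) := by
  have ha : a ∈ univ.erase b := mem_erase.2 ⟨hab, mem_univ a⟩
  have hb : ∑ i ∈ univ.erase b, p i = 1 - p b := by
    rw [sum_erase_eq_sub (mem_univ b), hp]
  have hrest : ∑ i ∈ (univ.erase b).erase a, p i = 1 - p a - p b := by
    rw [sum_erase_eq_sub ha, hb, sub_right_comm]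
  have hF : univ.filter (fun f : ι → α => (∀ k, f k ≠ b) ∧ #{k | f k = a} ≠ 1) =
      univ.filter (fun f : ι → α => ∀ k, f k ∈ univ.erase b) \
        univ.filter (fun f : ι → α => (∀ k, f k ∈ univ.erase b) ∧ #{k | f k = a} = 1) := by
    ext f
    simp only [mem_filter, mem_sdiff, mem_univ, mem_erase, ne_eq, and_true, true_and]
    tauto
  rw [hF, sum_sdiff_eq_sub (fun f hf => mem_filter.2 ⟨mem_univ f, (mem_filter.1 hf).2.1⟩),
    sum_prod_filter_forall_mem, sum_prod_filter_forall_mem_and_card_filter_eq_one p ha, hb, hrest]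

end

/-- Index `0` of `Fin n` stands for the number 1 and index `1` for the number 2. -/
theorem lupi_c2 (n : ℕ) (hn : 2 ≤ n) (p : Fin n → ℝ)
    (hp1 : ∑ i, p i = 1) :
    ∑ f ∈ Finset.univ.filter
        (fun f : Fin (n - 1) → Fin n =>
          (∀ k, f k ≠ (⟨1, by omega⟩ : Fin n)) ∧
          (Finset.univ.filter (fun k => f k = (⟨0, by omega⟩ : Fin n))).card ≠ 1),
      ∏ k, p (f k) =
      (1 - p ⟨1, by omega⟩) ^ (n - 1) -
        (n - 1 : ℝ) * p ⟨0, by omega⟩ *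
          (1 - p ⟨0, by omega⟩ - p ⟨1, by omega⟩) ^ (n - 2) := by
  have h := sum_prod_filter_forall_ne_and_card_filter_ne_one (ι := Fin (n - 1)) p hp1
    (a := ⟨0, by omega⟩) (b := ⟨1, by omega⟩) (by simp [Fin.ext_iff])
  rw [Fintype.card_fin, Nat.cast_sub (by omega : 1 ≤ n), Nat.cast_one, Nat.sub_sub] at h
  -- The goal decides `∀ k` by `Nat.decidableForallFin`, `h` by `Fintype.decidableForallFintype`.
  convert h using 3
end

section
/- Let n ≥ 3 and let p be a probability vector on {1,…,n} with 0 < pᵢ < 1 for all i and p₁ + p₂ < 1. If c₁(p) = c₂(p), i.e., (1−p₂)^(n−1) − (1−p₁)^(n−1) = (n−1)·p₁·(1−p₁−p₂)^(n−2), then p₂ < p₁. -/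
/-- If `0 < p₁, p₂ < 1`, `p₁ + p₂ < 1`, and `c₁(p) = c₂(p)`, i.e.
`(1-p₂)^(n-1) - (1-p₁)^(n-1) = (n-1)·p₁·(1-p₁-p₂)^(n-2)`, then `p₂ < p₁`:
the equilibrium strategy cannot be uniform. -/
theorem lupi_p2_lt_p1 (n : ℕ) (hn : 3 ≤ n) (p₁ p₂ : ℝ)
    (h₁0 : 0 < p₁) (h₁1 : p₁ < 1) (h₂0 : 0 < p₂) (h₂1 : p₂ < 1)
    (hsum : p₁ + p₂ < 1)
    (heq : (1 - p₂) ^ (n - 1) - (1 - p₁) ^ (n - 1) =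
      (n - 1 : ℝ) * p₁ * (1 - p₁ - p₂) ^ (n - 2)) :
    p₂ < p₁ := by
  by_contra h
  push_neg at h
  have hlhs : (1 - p₂) ^ (n - 1) - (1 - p₁) ^ (n - 1) ≤ 0 := by
    have : (1 - p₂) ^ (n - 1) ≤ (1 - p₁) ^ (n - 1) :=
      pow_le_pow_left₀ (by linarith) (by linarith) _
    linarith
  have hrhs : 0 < (n - 1 : ℝ) * p₁ * (1 - p₁ - p₂) ^ (n - 2) := by
    have hn1 : (0:ℝ) < (n : ℝ) - 1 := by
      have : (3:ℝ) ≤ (n:ℝ) := by exact_mod_cast hn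
      linarith
    have hp : (0:ℝ) < (1 - p₁ - p₂) ^ (n - 2) := pow_pos (by linarith) _
    exact mul_pos (mul_pos hn1 h₁0) hp
  linarith
end

section
/- For n = 3 players, the strategy p = (2√3 − 3, 2 − √3, 2 − √3) is a probability vector and satisfies c₁(p) = c₂(p) = c₃(p) = 28 − 16√3, where c₁(p) = (1−p₁)², c₂(p) = (1−p₂)² − 2p₁(1−p₁−p₂), and c₃(p) = (1−p₃)² − 2p₁(1−p₁−p₃) − 2p₂(1−p₂−p₃) + 2p₁p₂. -/
/-- For `n = 3`, the strategy `p = (2√3 - 3, 2 - √3, 2 - √3)` is a probability vector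
and equalizes the three winning probabilities: `c₁(p) = c₂(p) = c₃(p) = 28 - 16√3`. -/
theorem lupi_three_player_NE :
    let p₁ : ℝ := 2 * Real.sqrt 3 - 3
    let p₂ : ℝ := 2 - Real.sqrt 3
    let p₃ : ℝ := 2 - Real.sqrt 3
    (0 ≤ p₁ ∧ 0 ≤ p₂ ∧ 0 ≤ p₃ ∧ p₁ + p₂ + p₃ = 1) ∧
    (1 - p₁) ^ 2 = 28 - 16 * Real.sqrt 3 ∧
    (1 - p₂) ^ 2 - 2 * p₁ * (1 - p₁ - p₂) = 28 - 16 * Real.sqrt 3 ∧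
    (1 - p₃) ^ 2 - 2 * p₁ * (1 - p₁ - p₃) - 2 * p₂ * (1 - p₂ - p₃) + 2 * p₁ * p₂ =
      28 - 16 * Real.sqrt 3 := by
  have hs : Real.sqrt 3 ^ 2 = 3 := Real.sq_sqrt (by norm_num)
  have h1 : (1:ℝ) ≤ Real.sqrt 3 := by
    nlinarith [Real.sqrt_nonneg 3]
  have h2 : Real.sqrt 3 ≤ 2 := by
    nlinarith [Real.sqrt_nonneg 3]
  refine ⟨⟨by nlinarith, by nlinarith, by nlinarith, by ring⟩, by nlinarith, by nlinarith, by nlinarith⟩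
end

section
/- For fixed i ≥ 1, let cᵢ(n) be the probability that, among n−1 iid uniform draws from {1,…,n}, no number j < i is drawn exactly once and the number i is not drawn at all. Then cᵢ(n) → e^(−1)·(1 − e^(−1))^(i−1) as n → ∞. -/
open Finset Filter
open scoped Classical

/-- `lupiC i n` is the probability that, among `n-1` iid uniform draws from `{1,…,n}`
(encoded as `Fin n`, value `v` representing the number `v+1`), no number `j < i` is
drawn exactly once and the number `i` is not drawn at all. -/
noncomputable def lupiC (i n : ℕ) : ℝ :=
  ((Finset.univ.filter (fun f : Fin (n - 1) → Fin n =>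
      (∀ j : ℕ, j + 1 < i →
        (Finset.univ.filter (fun k => (f k : ℕ) = j)).card ≠ 1) ∧
      ∀ k, (f k : ℕ) ≠ i - 1)).card : ℝ) / (n : ℝ) ^ (n - 1)


/-- cardinality of a fiber is unchanged when restricting the domain away from a point
outside the fiber -/
lemma fiber_restrict {K V : Type} [Fintype K] [DecidableEq K] [DecidableEq V]
    (f : K → V) (k : K) (b : V) (hb : f k ≠ b) :
    (univ.filter (fun k' : {x : K // x ≠ k} => f k'.1 = b)).card
      = (univ.filter (fun x : K => f x = b)).card := by
  apply Finset.card_bij (fun k' _ => k'.1)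
  · intro a ha
    simp only [mem_filter, mem_univ, true_and] at ha ⊢
    exact ha
  · intro a₁ _ a₂ _ h
    exact Subtype.ext h
  · intro x hx
    simp only [mem_filter, mem_univ, true_and] at hx
    have hxk : x ≠ k := by rintro rfl; exact hb hx
    exact ⟨⟨x, hxk⟩, by simpa using hx, rfl⟩

lemma count_avoid {K V : Type} [Fintype K] [DecidableEq K] [Fintype V] [DecidableEq V]
    (B : Finset V) :
    (univ.filter (fun f : K → V => ∀ k, f k ∉ B)).card
      = (Fintype.card V - B.card) ^ Fintype.card K := by
  rw [← Fintype.card_subtype]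
  have e : {f : K → V // ∀ k, f k ∉ B} ≃ (K → {v : V // v ∉ B}) :=
    Equiv.subtypePiEquivPi (p := fun _ v => v ∉ B)
  rw [Fintype.card_congr e, Fintype.card_fun]
  congr 1
  rw [Fintype.card_subtype_compl]
  congr 1
  simp [Fintype.card_subtype]

lemma count_main {V : Type} [Fintype V] [DecidableEq V] :
    ∀ (t : ℕ) (K : Type) [Fintype K] [DecidableEq K] (S B : Finset V),
      Disjoint S B → S.card = t → t ≤ Fintype.card K →
      (univ.filter (fun f : K → V =>
          (∀ a ∈ S, (univ.filter (fun k => f k = a)).card = 1) ∧ ∀ k, f k ∉ B)).card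
        = (Fintype.card K).descFactorial t *
          (Fintype.card V - t - B.card) ^ (Fintype.card K - t) := by
  intro t
  induction t with
  | zero =>
    intro K _ _ S B hdisj hcard _
    rw [Finset.card_eq_zero] at hcard; subst hcard
    simp only [notMem_empty, false_implies, implies_true, true_and]
    rw [count_avoid]
    simp
  | succ t ih =>
    intro K _ _ S B hdisj hcard hle
    have hKpos : 0 < Fintype.card K := lt_of_lt_of_le (Nat.succ_pos t) hle
    have hKne : Nonempty K := Fintype.card_pos_iff.mp hKpos
    obtain ⟨a, ha⟩ : S.Nonempty := Finset.card_pos.mp (by omega)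
    have haB : a ∉ B := Finset.disjoint_left.mp hdisj ha
    set S' := S.erase a with hS'
    have haS' : a ∉ S' := Finset.notMem_erase a S
    have hS'card : S'.card = t := by
      rw [hS', Finset.card_erase_of_mem ha, hcard]
      omega
    classical
    set g : (K → V) → K := fun f =>
      if h : ∃ k, f k = a then h.choose else Classical.arbitrary K with hg
    set A := univ.filter (fun f : K → V =>
        (∀ b ∈ S, (univ.filter (fun k => f k = b)).card = 1) ∧ ∀ k, f k ∉ B) with hA
    have hsum : A.card = ∑ k ∈ univ, (A.filter (fun f => g f = k)).card :=
      Finset.card_eq_sum_card_fiberwise (fun f _ => mem_univ _)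
    -- identify the fibers of g
    have hfib : ∀ k : K, A.filter (fun f => g f = k) = A.filter (fun f => f k = a) := by
      intro k
      ext f
      simp only [mem_filter, and_congr_right_iff]
      intro hfA
      have hfib1 : (univ.filter (fun x => f x = a)).card = 1 := by
        rw [hA, mem_filter] at hfA
        exact hfA.2.1 a ha
      obtain ⟨k₀, hk₀⟩ := Finset.card_eq_one.mp hfib1
      have hk₀mem : f k₀ = a := by
        have h0 : k₀ ∈ univ.filter (fun x => f x = a) := by
          rw [hk₀]; exact Finset.mem_singleton_self k₀
        simpa using h0
      have hmem : ∀ x : K, f x = a ↔ x = k₀ := by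
        intro x
        constructor
        · intro hx
          have h0 : x ∈ univ.filter (fun x => f x = a) := by simp [hx]
          rw [hk₀] at h0; simpa using h0
        · intro hx; rw [hx]; exact hk₀mem
      have hex : ∃ x, f x = a := ⟨k₀, (hmem k₀).mpr rfl⟩
      have hgf : g f = k₀ := by
        rw [hg]; simp only [dif_pos hex]
        exact (hmem _).mp hex.choose_spec
      rw [hgf]
      constructor
      · intro hk; rw [← hk]; exact hk₀mem
      · intro hk; exact ((hmem k).mp hk).symm
    -- each fiber has the cardinality given by the inductive hypothesis
    have hcard_fiber : ∀ k : K,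
        (A.filter (fun f => f k = a)).card
          = (Fintype.card K - 1).descFactorial t *
            (Fintype.card V - t - (B.card + 1)) ^ (Fintype.card K - 1 - t) := by
      intro k
      have hKsub : Fintype.card {x : K // x ≠ k} = Fintype.card K - 1 := by
        rw [Fintype.card_subtype_compl, Fintype.card_subtype_eq]
      have hdisj' : Disjoint S' (insert a B) := by
        rw [Finset.disjoint_insert_right]
        exact ⟨haS', Finset.disjoint_of_subset_left (Finset.erase_subset a S) hdisj⟩
      have hle' : t ≤ Fintype.card {x : K // x ≠ k} := by omega
      have := ih {x : K // x ≠ k} S' (insert a B) hdisj' hS'card hle'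
      rw [hKsub, Finset.card_insert_of_notMem haB] at this
      rw [← this]
      -- bijection between the fiber and functions on the smaller domain
      apply Finset.card_bij (fun f _ => (fun k' : {x : K // x ≠ k} => f k'.1))
      · intro f hf
        rw [Finset.mem_filter, hA, Finset.mem_filter] at hf
        obtain ⟨⟨-, hfS, hfB⟩, hfk⟩ := hf
        have hfib1 := hfS a ha
        have hmem : ∀ x : K, f x = a → x = k := by
          intro x hx
          obtain ⟨k₀, hk₀⟩ := Finset.card_eq_one.mp hfib1
          have h1 : x ∈ univ.filter (fun x => f x = a) := by simp [hx]
          have h2 : k ∈ univ.filter (fun x => f x = a) := by simp [hfk]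
          rw [hk₀, Finset.mem_singleton] at h1 h2
          rw [h1, h2]
        simp only [mem_filter, mem_univ, true_and]
        constructor
        · intro b hb
          have hba : b ≠ a := by rintro rfl; exact haS' hb
          rw [fiber_restrict f k b (by rw [hfk]; exact fun h => hba h.symm)]
          exact hfS b (Finset.mem_of_mem_erase hb)
        · intro k'
          rw [Finset.mem_insert]
          push_neg
          exact ⟨fun h => k'.2 (hmem _ h), hfB k'.1⟩
      · intro f₁ hf₁ f₂ hf₂ h
        rw [Finset.mem_filter] at hf₁ hf₂
        funext x
        by_cases hx : x = k
        · rw [hx, hf₁.2, hf₂.2]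
        · exact congrFun h ⟨x, hx⟩
      · intro gg hgg
        rw [Finset.mem_filter] at hgg
        obtain ⟨-, hggS, hggB⟩ := hgg
        refine ⟨fun x => if h : x = k then a else gg ⟨x, h⟩, ?_, ?_⟩
        · have hfk : (fun x => if h : x = k then a else gg ⟨x, h⟩) k = a := dif_pos rfl
          have hfk' : (if h : k = k then a else gg ⟨k, h⟩) = a := dif_pos rfl
          have hres : (fun k' : {x : K // x ≠ k} =>
              (fun x => if h : x = k then a else gg ⟨x, h⟩) k'.1) = gg := by
            funext k'; exact dif_neg k'.2
          rw [Finset.mem_filter, hA, Finset.mem_filter]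
          refine ⟨⟨mem_univ _, ?_, ?_⟩, hfk⟩
          · intro b hb
            have hSins : S = insert a S' := (Finset.insert_erase ha).symm
            rcases Finset.mem_insert.mp (hSins ▸ hb) with hb' | hb'
            · subst hb'
              have : univ.filter (fun x => (if h : x = k then b else gg ⟨x, h⟩) = b) = {k} := by
                ext x
                simp only [mem_filter, mem_univ, true_and, Finset.mem_singleton]
                by_cases hx : x = k
                · simp [hx]
                · rw [dif_neg hx]
                  constructor
                  · intro hgx
                    exact absurd (Finset.mem_insert_self b B) (hgx ▸ hggB ⟨x, hx⟩)
                  · intro h; exact absurd h hx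
              rw [this, Finset.card_singleton]
            · have hba : b ≠ a := by rintro rfl; exact haS' hb'
              rw [← fiber_restrict _ k b
                (by intro h; rw [hfk'] at h; exact hba h.symm)]
              rw [Finset.filter_congr (fun k' _ =>
                (by rw [dif_neg k'.2] :
                  ((if h : k'.1 = k then a else gg ⟨k'.1, h⟩) = b) ↔ (gg k' = b)))]
              exact hggS b hb'
          · intro x
            show (if h : x = k then a else gg ⟨x, h⟩) ∉ B
            by_cases hx : x = k
            · rw [dif_pos hx]; exact haB
            · rw [dif_neg hx]
              exact fun h => hggB ⟨x, hx⟩ (Finset.mem_insert_of_mem h)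
        · funext k'; exact dif_neg k'.2
    rw [hsum]
    rw [Finset.sum_congr rfl (fun k _ => by rw [hfib k, hcard_fiber k])]
    rw [Finset.sum_const, Finset.card_univ, smul_eq_mul]
    have hK1 : Fintype.card K = (Fintype.card K - 1) + 1 := by omega
    have h1 : Fintype.card V - t - (B.card + 1) = Fintype.card V - (t + 1) - B.card := by omega
    have h2 : Fintype.card K - 1 - t = Fintype.card K - (t + 1) := by omega
    have h3 : (Fintype.card K).descFactorial (t + 1)
        = Fintype.card K * (Fintype.card K - 1).descFactorial t := by
      conv_lhs => rw [hK1]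
      rw [Nat.succ_descFactorial_succ, ← hK1]
    rw [h1, h2, h3]
    ring


lemma incl_excl {K V : Type} [Fintype K] [DecidableEq K] [Fintype V] [DecidableEq V]
    (S₀ : Finset V) (Q : (K → V) → Prop) :
    ((univ.filter (fun f : K → V =>
        (∀ a ∈ S₀, (univ.filter (fun k => f k = a)).card ≠ 1) ∧ Q f)).card : ℝ)
      = ∑ T ∈ S₀.powerset, (-1 : ℝ) ^ T.card *
          ((univ.filter (fun f : K → V =>
            (∀ a ∈ T, (univ.filter (fun k => f k = a)).card = 1) ∧ Q f)).card : ℝ) := by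
  rw [← Finset.sum_boole]
  have key : ∀ f : K → V,
      (if ((∀ a ∈ S₀, (univ.filter (fun k => f k = a)).card ≠ 1) ∧ Q f) then (1:ℝ) else 0)
        = ∑ T ∈ S₀.powerset, (-1:ℝ)^T.card *
            (if ((∀ a ∈ T, (univ.filter (fun k => f k = a)).card = 1) ∧ Q f)
              then (1:ℝ) else 0) := by
    intro f
    by_cases hQ : Q f
    · simp only [hQ, and_true]
      have h0 : (if ∀ a ∈ S₀, (univ.filter (fun k => f k = a)).card ≠ 1
            then (1:ℝ) else 0)
          = ∏ a ∈ S₀, (if (univ.filter (fun k => f k = a)).card ≠ 1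
            then (1:ℝ) else 0) := by
        by_cases h : ∀ a ∈ S₀, (univ.filter (fun k => f k = a)).card ≠ 1
        · rw [if_pos h]
          exact (Finset.prod_eq_one (fun a ha => if_pos (h a ha))).symm
        · rw [if_neg h]
          push_neg at h
          obtain ⟨a, ha, h1⟩ := h
          exact (Finset.prod_eq_zero ha (by simp [h1])).symm
      rw [h0]
      have hfac : ∀ a ∈ S₀,
          (if (univ.filter (fun k => f k = a)).card ≠ 1 then (1:ℝ) else 0)
            = (-(if (univ.filter (fun k => f k = a)).card = 1 then (1:ℝ) else 0)) + 1 := by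
        intro a _
        by_cases h : (univ.filter (fun k => f k = a)).card = 1 <;> simp [h]
      rw [Finset.prod_congr rfl hfac, Finset.prod_add]
      refine Finset.sum_congr rfl (fun T hT => ?_)
      rw [Finset.prod_const_one, mul_one]
      have hneg : (∏ a ∈ T, (-(if (univ.filter (fun k => f k = a)).card = 1
            then (1:ℝ) else 0)))
          = (-1:ℝ)^T.card * ∏ a ∈ T, (if (univ.filter (fun k => f k = a)).card = 1
            then (1:ℝ) else 0) := by
        rw [← Finset.prod_const (-1:ℝ), ← Finset.prod_mul_distrib]
        exact Finset.prod_congr rfl (fun a _ => by ring)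
      rw [hneg, Finset.prod_boole]
      by_cases hall : ∀ a ∈ T, (univ.filter (fun k => f k = a)).card = 1
      · rw [if_pos hall, if_pos hall]
      · rw [if_neg hall, if_neg hall]
    · simp [hQ]
  rw [Finset.sum_congr rfl (fun f _ => key f), Finset.sum_comm]
  refine Finset.sum_congr rfl (fun T _ => ?_)
  rw [← Finset.mul_sum, Finset.sum_boole]


lemma term_tendsto (t : ℕ) :
    Tendsto (fun n : ℕ => ((n - 1).descFactorial t : ℝ) *
        ((n - 1 - t : ℕ) : ℝ) ^ (n - 1 - t) / (n : ℝ) ^ (n - 1)) atTop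
      (nhds (Real.exp (-1) ^ (t + 1))) := by
  have hAlim : Tendsto (fun n : ℕ => (1 - ((t:ℝ)+1)/n)^(n-1-t)) atTop
      (nhds (Real.exp (-((t:ℝ)+1)))) := by
    have hb : Tendsto (fun n : ℕ => (1 + (-((t:ℝ)+1))/n)^n) atTop
        (nhds (Real.exp (-((t:ℝ)+1)))) := Real.tendsto_one_add_div_pow_exp _
    have h1 : Tendsto (fun n : ℕ => 1 - ((t:ℝ)+1)/n) atTop (nhds 1) := by
      have := tendsto_const_div_atTop_nhds_zero_nat ((t:ℝ)+1)
      simpa using tendsto_const_nhds.sub this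
    have hc : Tendsto (fun n : ℕ => (1 - ((t:ℝ)+1)/n)^(t+1)) atTop (nhds 1) := by
      simpa using h1.pow (t+1)
    have hdiv := hb.div hc one_ne_zero
    rw [div_one] at hdiv
    refine hdiv.congr' ?_
    filter_upwards [eventually_ge_atTop (t+2)] with n hn
    have hn0 : (0:ℝ) < (n:ℝ) := by
      have : 0 < n := by omega
      exact_mod_cast this
    have hne : (1 : ℝ) - ((t:ℝ)+1)/(n:ℝ) ≠ 0 := by
      have hlt : ((t:ℝ)+1)/(n:ℝ) < 1 := by
        rw [div_lt_one hn0]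
        have : t + 1 < n := by omega
        exact_mod_cast this
      intro h; linarith
    have hx : (1 : ℝ) + (-((t:ℝ)+1))/(n:ℝ) = 1 - ((t:ℝ)+1)/(n:ℝ) := by ring
    simp only [Pi.div_apply]
    rw [hx]
    rw [show n - 1 - t = n - (t+1) by omega, pow_sub₀ _ hne (by omega), div_eq_mul_inv]
  have hPlim : Tendsto (fun n : ℕ => ∏ r ∈ range t, (1 - ((r:ℝ)+1)/n)) atTop
      (nhds 1) := by
    have h := tendsto_finset_prod (f := fun (r : ℕ) (n : ℕ) => 1 - ((r:ℝ)+1)/n)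
      (range t) (fun r _ => by
        simpa using tendsto_const_nhds.sub (tendsto_const_div_atTop_nhds_zero_nat ((r:ℝ)+1)))
    simpa using h
  have hG := hPlim.mul hAlim
  rw [one_mul] at hG
  have hfin : Real.exp (-((t:ℝ)+1)) = Real.exp (-1) ^ (t+1) := by
    rw [← Real.exp_nat_mul]; congr 1; push_cast; ring
  rw [hfin] at hG
  refine hG.congr' ?_
  filter_upwards [eventually_ge_atTop (t+2)] with n hn
  have hn0 : (0:ℝ) < (n:ℝ) := by
    have : 0 < n := by omega
    exact_mod_cast this
  have hne : (n:ℝ) ≠ 0 := ne_of_gt hn0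
  have hcast1 : ((n - 1).descFactorial t : ℝ) = ∏ r ∈ range t, ((n:ℝ) - ((r:ℝ)+1)) := by
    rw [Nat.descFactorial_eq_prod_range, Nat.cast_prod]
    refine Finset.prod_congr rfl fun r hr => ?_
    rw [Finset.mem_range] at hr
    rw [show n - 1 - r = n - (r+1) by omega, Nat.cast_sub (by omega)]
    push_cast; ring
  have hcast2 : ((n - 1 - t : ℕ) : ℝ) = (n:ℝ) - ((t:ℝ)+1) := by
    rw [show n - 1 - t = n - (t+1) by omega, Nat.cast_sub (by omega)]
    push_cast; ring
  have hpow : (n:ℝ)^(n-1) = (n:ℝ)^t * (n:ℝ)^(n-1-t) := by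
    rw [← pow_add]; congr 1; omega
  have hfac : ∀ c : ℝ, 1 - c/(n:ℝ) = ((n:ℝ) - c)/(n:ℝ) := by
    intro c; field_simp
  simp only [hfac]
  rw [hcast1, hcast2, hpow, Finset.prod_div_distrib, Finset.prod_const, div_pow]
  rw [Finset.card_range]
  rw [div_mul_div_comm]

lemma card_filter_iff {α : Type} [Fintype α] {p q : α → Prop}
    {dp : DecidablePred p} {dq : DecidablePred q} (h : ∀ a, p a ↔ q a) :
    (univ.filter p).card = (univ.filter q).card := by
  congr 1
  ext a
  simp only [Finset.mem_filter, Finset.mem_univ, true_and]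
  exact h a

lemma lupi_identity (i : ℕ) (hi : 1 ≤ i) (n : ℕ) (hn : i + 1 ≤ n) :
    lupiC i n = ∑ t ∈ range i, ((i - 1).choose t : ℝ) * ((-1:ℝ)^t *
      (((n - 1).descFactorial t : ℝ) * ((n - 1 - t : ℕ) : ℝ) ^ (n - 1 - t)
        / (n : ℝ) ^ (n - 1))) := by
  have hbv : i - 1 < n := by omega
  set b : Fin n := ⟨i - 1, hbv⟩ with hb
  set S₀ : Finset (Fin n) := univ.filter (fun v : Fin n => (v : ℕ) + 1 < i) with hS₀def
  have hbS₀ : b ∉ S₀ := by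
    intro h
    have h2 := (Finset.mem_filter.mp h).2
    have h3 : (b : ℕ) = i - 1 := rfl
    omega
  have hS₀card : S₀.card = i - 1 := by
    rw [← Finset.card_range (i - 1)]
    refine Finset.card_bij (fun (v : Fin n) (_ : v ∈ S₀) => (v : ℕ)) ?_ ?_ ?_
    · intro v hv
      have h2 := (Finset.mem_filter.mp hv).2
      rw [Finset.mem_range]
      omega
    · intro v₁ _ v₂ _ h; exact Fin.ext h
    · intro j hj
      rw [Finset.mem_range] at hj
      refine ⟨⟨j, by omega⟩, Finset.mem_filter.mpr ⟨mem_univ _, ?_⟩, rfl⟩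
      simpa using (by omega : j + 1 < i)
  have hfil : ∀ (f : Fin (n-1) → Fin n) (a : Fin n),
      (univ.filter (fun k => f k = a)) = (univ.filter (fun k => (f k : ℕ) = (a : ℕ))) :=
    fun f a => Finset.filter_congr (fun k _ => by rw [Fin.ext_iff])
  have hiff : ∀ f : Fin (n-1) → Fin n,
      ((∀ j : ℕ, j + 1 < i → (univ.filter (fun k => (f k : ℕ) = j)).card ≠ 1) ∧
        ∀ k, (f k : ℕ) ≠ i - 1)
      ↔ ((∀ a ∈ S₀, (univ.filter (fun k => f k = a)).card ≠ 1) ∧ ∀ k, f k ≠ b) := by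
    intro f
    constructor
    · rintro ⟨h1, h2⟩
      constructor
      · intro a haS
        have hai : (a : ℕ) + 1 < i := (Finset.mem_filter.mp haS).2
        rw [hfil]
        exact h1 (a : ℕ) hai
      · intro k hk
        exact h2 k (by rw [hk])
    · rintro ⟨h1, h2⟩
      constructor
      · intro j hj
        have hjn : j < n := by omega
        have hmem : (⟨j, hjn⟩ : Fin n) ∈ S₀ := by
          refine Finset.mem_filter.mpr ⟨mem_univ _, ?_⟩
          simpa using hj
        have := h1 _ hmem
        rw [hfil] at this
        exact this
      · intro k hk
        exact h2 k (Fin.ext hk)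
  have hcardT : ∀ T ∈ S₀.powerset,
      ((univ.filter (fun f : Fin (n-1) → Fin n =>
          (∀ a ∈ T, (univ.filter (fun k => f k = a)).card = 1) ∧ ∀ k, f k ≠ b)).card : ℕ)
        = (n-1).descFactorial T.card * (n - 1 - T.card) ^ (n - 1 - T.card) := by
    intro T hT
    have hTsub : T ⊆ S₀ := Finset.mem_powerset.mp hT
    have hdisj : Disjoint T ({b} : Finset (Fin n)) :=
      Finset.disjoint_singleton_right.mpr (fun hbT => hbS₀ (hTsub hbT))
    have hle : T.card ≤ n - 1 := by
      have := Finset.card_le_card hTsub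
      omega
    have hcm := count_main T.card (Fin (n-1)) T ({b} : Finset (Fin n)) hdisj rfl
      (by rw [Fintype.card_fin]; exact hle)
    rw [Fintype.card_fin, Fintype.card_fin, Finset.card_singleton] at hcm
    have hfe : (univ.filter (fun f : Fin (n-1) → Fin n =>
          (∀ a ∈ T, (univ.filter (fun k => f k = a)).card = 1) ∧ ∀ k, f k ≠ b))
        = (univ.filter (fun f : Fin (n-1) → Fin n =>
          (∀ a ∈ T, (univ.filter (fun k => f k = a)).card = 1) ∧
            ∀ k, f k ∉ ({b} : Finset (Fin n)))) :=
      Finset.filter_congr (fun f _ => by simp)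
    have harith : n - T.card - 1 = n - 1 - T.card := Nat.sub_right_comm n T.card 1
    rw [harith] at hcm
    rw [hfe]
    refine Eq.trans ?_ hcm
    congr 1
    ext f
    simp only [Finset.mem_filter]
  -- main computation
  rw [lupiC]
  rw [Finset.filter_congr (fun f _ => hiff f)]
  have hie := incl_excl (K := Fin (n-1)) (V := Fin n) S₀ (fun f => ∀ k, f k ≠ b)
  have hie2 : ((univ.filter (fun f : Fin (n-1) → Fin n =>
        (∀ a ∈ S₀, (univ.filter (fun k => f k = a)).card ≠ 1) ∧ ∀ k, f k ≠ b)).card : ℝ)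
      = ∑ T ∈ S₀.powerset, (-1 : ℝ) ^ T.card *
          ((univ.filter (fun f : Fin (n-1) → Fin n =>
            (∀ a ∈ T, (univ.filter (fun k => f k = a)).card = 1) ∧ ∀ k, f k ≠ b)).card : ℝ) := by
    convert hie using 2
    · exact card_filter_iff (fun f => Iff.rfl)
    · congr 1
      exact_mod_cast card_filter_iff (fun f => Iff.rfl)
  rw [hie2]
  rw [Finset.sum_div]
  have hstep : ∀ T ∈ S₀.powerset,
      (-1 : ℝ) ^ T.card *
        ((univ.filter (fun f : Fin (n-1) → Fin n =>
          (∀ a ∈ T, (univ.filter (fun k => f k = a)).card = 1) ∧ ∀ k, f k ≠ b)).card : ℝ)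
        / (n : ℝ) ^ (n - 1)
      = (-1 : ℝ) ^ T.card *
          (((n-1).descFactorial T.card : ℝ) *
            ((n - 1 - T.card : ℕ) : ℝ) ^ (n - 1 - T.card) / (n : ℝ) ^ (n - 1)) := by
    intro T hT
    rw [hcardT T hT]
    push_cast
    ring
  rw [Finset.sum_congr rfl hstep]
  rw [Finset.sum_powerset]
  rw [hS₀card, show i - 1 + 1 = i by omega]
  refine Finset.sum_congr rfl (fun t ht => ?_)
  have hinner : ∀ T ∈ Finset.powersetCard t S₀,
      (-1 : ℝ) ^ T.card *
          (((n-1).descFactorial T.card : ℝ) *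
            ((n - 1 - T.card : ℕ) : ℝ) ^ (n - 1 - T.card) / (n : ℝ) ^ (n - 1))
      = (-1 : ℝ) ^ t *
          (((n-1).descFactorial t : ℝ) *
            ((n - 1 - t : ℕ) : ℝ) ^ (n - 1 - t) / (n : ℝ) ^ (n - 1)) := by
    intro T hT
    rw [(Finset.mem_powersetCard.mp hT).2]
  rw [Finset.sum_congr rfl hinner, Finset.sum_const, Finset.card_powersetCard, hS₀card]
  rw [nsmul_eq_mul]

/-- For fixed `i ≥ 1`, the probability `lupiC i n` of winning the LUPI game by
choosing number `i` against `n-1` uniform opponents tends to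
`e⁻¹·(1 - e⁻¹)^(i-1)` as `n → ∞`. -/
theorem lupi_ci_limit (i : ℕ) (hi : 1 ≤ i) :
    Tendsto (fun n : ℕ => lupiC i n) atTop
      (nhds (Real.exp (-1) * (1 - Real.exp (-1)) ^ (i - 1))) := by
  have hL : ∑ t ∈ range i, ((i - 1).choose t : ℝ) * ((-1:ℝ)^t * Real.exp (-1) ^ (t+1))
      = Real.exp (-1) * (1 - Real.exp (-1)) ^ (i - 1) := by
    rw [show (1:ℝ) - Real.exp (-1) = -Real.exp (-1) + 1 by ring, add_pow,
      show i - 1 + 1 = i by omega, Finset.mul_sum]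
    refine Finset.sum_congr rfl fun t ht => ?_
    rw [one_pow, neg_pow]
    ring
  have hsum : Tendsto (fun n : ℕ => ∑ t ∈ range i,
      ((i - 1).choose t : ℝ) * ((-1:ℝ)^t *
        (((n - 1).descFactorial t : ℝ) * ((n - 1 - t : ℕ) : ℝ) ^ (n - 1 - t)
          / (n : ℝ) ^ (n - 1)))) atTop
      (nhds (∑ t ∈ range i, ((i - 1).choose t : ℝ) *
        ((-1:ℝ)^t * Real.exp (-1) ^ (t+1)))) := by
    refine tendsto_finset_sum _ fun t _ => ?_
    exact ((term_tendsto t).const_mul _).const_mul _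
  rw [hL] at hsum
  refine hsum.congr' ?_
  filter_upwards [eventually_ge_atTop (i+1)] with n hn
  exact (lupi_identity i hi n hn).symm
end
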